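/- arXiv:2403.06393 — 4 statements merged into one kernel-verified Lean document; each statement's English description precedes it below -/
import Mathlib

section
/- Let Ω = [a₁,b₁]×[a₂,b₂], let C be a prescribed function on ∂Ω, and let A be the 2D TFC boundary projection operator (Af = v₁ᵀ M(·,·;f) v₂ with linear switching vectors). For any function g : Ω → ℝ, the function u = g - Ag + AC satisfies u = C on all four edges of ∂Ω. Conversely, any u : Ω → ℝ with u|∂Ω = C equals g - Ag + AC for some g (namely g = u). -/
noncomputable def tfcA (a₁ b₁ a₂ b₂ : ℝ) (f : ℝ → ℝ → ℝ) (x y : ℝ) : ℝ :=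
  dotProduct
    ![1, (b₁ - x) / (b₁ - a₁), (x - a₁) / (b₁ - a₁)]
    ((!![(0 : ℝ), f x a₂, f x b₂;
        f a₁ y, -f a₁ a₂, -f a₁ b₂;
        f b₁ y, -f b₁ a₂, -f b₁ b₂]).mulVec
      ![1, (b₂ - y) / (b₂ - a₂), (y - a₂) / (b₂ - a₂)])

lemma tfcA_eval (a₁ b₁ a₂ b₂ : ℝ) (f : ℝ → ℝ → ℝ) (x y : ℝ) :
    tfcA a₁ b₁ a₂ b₂ f x y =
      (f x a₂ * ((b₂ - y) / (b₂ - a₂)) + f x b₂ * ((y - a₂) / (b₂ - a₂)))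
      + ((b₁ - x) / (b₁ - a₁)) * (f a₁ y - f a₁ a₂ * ((b₂ - y) / (b₂ - a₂)) - f a₁ b₂ * ((y - a₂) / (b₂ - a₂)))
      + ((x - a₁) / (b₁ - a₁)) * (f b₁ y - f b₁ a₂ * ((b₂ - y) / (b₂ - a₂)) - f b₁ b₂ * ((y - a₂) / (b₂ - a₂))) := by
  simp [tfcA, Matrix.mulVec, dotProduct, Fin.sum_univ_succ, Matrix.cons_val_zero,
    Matrix.cons_val_one]
  ring

lemma tfcA_bot (a₁ b₁ a₂ b₂ : ℝ) (h1 : b₁ - a₁ ≠ 0) (h2 : b₂ - a₂ ≠ 0) (f : ℝ → ℝ → ℝ) (x : ℝ) :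
    tfcA a₁ b₁ a₂ b₂ f x a₂ = f x a₂ := by
  rw [tfcA_eval]; field_simp [h1, h2]; ring

lemma tfcA_top (a₁ b₁ a₂ b₂ : ℝ) (h1 : b₁ - a₁ ≠ 0) (h2 : b₂ - a₂ ≠ 0) (f : ℝ → ℝ → ℝ) (x : ℝ) :
    tfcA a₁ b₁ a₂ b₂ f x b₂ = f x b₂ := by
  rw [tfcA_eval]; field_simp [h1, h2]; ring

lemma tfcA_left (a₁ b₁ a₂ b₂ : ℝ) (h1 : b₁ - a₁ ≠ 0) (h2 : b₂ - a₂ ≠ 0) (f : ℝ → ℝ → ℝ) (y : ℝ) :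
    tfcA a₁ b₁ a₂ b₂ f a₁ y = f a₁ y := by
  rw [tfcA_eval]; field_simp [h1, h2]; ring

lemma tfcA_right (a₁ b₁ a₂ b₂ : ℝ) (h1 : b₁ - a₁ ≠ 0) (h2 : b₂ - a₂ ≠ 0) (f : ℝ → ℝ → ℝ) (y : ℝ) :
    tfcA a₁ b₁ a₂ b₂ f b₁ y = f b₁ y := by
  rw [tfcA_eval]; field_simp [h1, h2]; ring

theorem stmt11 (a₁ b₁ a₂ b₂ : ℝ) (h1 : a₁ < b₁) (h2 : a₂ < b₂) (C : ℝ → ℝ → ℝ) :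
    (∀ (g : ℝ → ℝ → ℝ) (u : ℝ → ℝ → ℝ),
      (∀ x y, u x y = g x y - tfcA a₁ b₁ a₂ b₂ g x y + tfcA a₁ b₁ a₂ b₂ C x y) →
      (∀ x ∈ Set.Icc a₁ b₁, u x a₂ = C x a₂ ∧ u x b₂ = C x b₂) ∧
      (∀ y ∈ Set.Icc a₂ b₂, u a₁ y = C a₁ y ∧ u b₁ y = C b₁ y)) ∧
    (∀ u : ℝ → ℝ → ℝ,
      (∀ x ∈ Set.Icc a₁ b₁, u x a₂ = C x a₂ ∧ u x b₂ = C x b₂) →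
      (∀ y ∈ Set.Icc a₂ b₂, u a₁ y = C a₁ y ∧ u b₁ y = C b₁ y) →
      ∃ g : ℝ → ℝ → ℝ, ∀ x ∈ Set.Icc a₁ b₁, ∀ y ∈ Set.Icc a₂ b₂,
        u x y = g x y - tfcA a₁ b₁ a₂ b₂ g x y + tfcA a₁ b₁ a₂ b₂ C x y) := by
  have h1' : b₁ - a₁ ≠ 0 := sub_ne_zero.2 (ne_of_gt h1)
  have h2' : b₂ - a₂ ≠ 0 := sub_ne_zero.2 (ne_of_gt h2)
  constructor
  · intro g u hu
    refine ⟨fun x _ => ⟨?_, ?_⟩, fun y _ => ⟨?_, ?_⟩⟩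
    · rw [hu, tfcA_bot a₁ b₁ a₂ b₂ h1' h2', tfcA_bot a₁ b₁ a₂ b₂ h1' h2']; ring
    · rw [hu, tfcA_top a₁ b₁ a₂ b₂ h1' h2', tfcA_top a₁ b₁ a₂ b₂ h1' h2']; ring
    · rw [hu, tfcA_left a₁ b₁ a₂ b₂ h1' h2', tfcA_left a₁ b₁ a₂ b₂ h1' h2']; ring
    · rw [hu, tfcA_right a₁ b₁ a₂ b₂ h1' h2', tfcA_right a₁ b₁ a₂ b₂ h1' h2']; ring
  · intro u hb hlr
    refine ⟨u, fun x hx y hy => ?_⟩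
    have e1 := (hb x hx).1
    have e2 := (hb x hx).2
    have e3 := (hlr y hy).1
    have e4 := (hlr y hy).2
    have ea1 := (hb a₁ ⟨le_refl _, le_of_lt h1⟩)
    have eb1 := (hb b₁ ⟨le_of_lt h1, le_refl _⟩)
    have hA : tfcA a₁ b₁ a₂ b₂ u x y = tfcA a₁ b₁ a₂ b₂ C x y := by
      rw [tfcA_eval, tfcA_eval, e1, e2, e3, e4, ea1.1, ea1.2, eb1.1, eb1.2]
    rw [hA]; ring
end

section
/- Let Ω₁ = [a₁,c]×[a₂,b₂] and Ω₂ = [c,b₁]×[a₂,b₂] with a₁ < c < b₁, let C be a boundary function on ∂([a₁,b₁]×[a₂,b₂]), and let κ : [a₂,b₂] → ℝ satisfy κ(a₂) = κ(b₂) = 0. Let α(y) = α̂(y) + (C(c,a₂) - α̂(a₂))φ₀(a₂,b₂,y) + (C(c,b₂) - α̂(b₂))φ₁(a₂,b₂,y) for an arbitrary function α̂. Define u₁ on Ω₁ by u₁ = g₁ + v₁ᵀ M₁ v₂ (the 2D TFC form with edge data C on x=a₁, y=a₂, y=b₂ and edge data α(y) on x=c), and define u₂ on Ω₂ analogously with edge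 data α(y) - κ(y) on x=c and C on the other edges. Then for arbitrary g₁, g₂, α̂: u₁ and u₂ each satisfy the prescribed boundary conditions on the outer boundary edges, and u₁(c,y) = u₂(c,y) + κ(y) for all y ∈ [a₂,b₂]. -/
/-- Extension of an interface free function `α̂` to match the corner values
`va = C(c,a₂)` and `vb = C(c,b₂)` (equation (41) of the paper). -/
noncomputable def alphaExt (a₂ b₂ va vb : ℝ) (αh : ℝ → ℝ) (y : ℝ) : ℝ :=
  αh y + (va - αh a₂) * ((b₂ - y) / (b₂ - a₂)) + (vb - αh b₂) * ((y - a₂) / (b₂ - a₂))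

/-- The constrained form (44) for `u₁` on `Ω₁ = [a₁,c]×[a₂,b₂]`, with edge data `C`
on `x = a₁`, `y = a₂`, `y = b₂` and edge data `α` on the interface `x = c`. -/
noncomputable def u1Form (a₁ c a₂ b₂ : ℝ) (C : ℝ → ℝ → ℝ) (α : ℝ → ℝ)
    (g₁ : ℝ → ℝ → ℝ) (x y : ℝ) : ℝ :=
  g₁ x y + dotProduct
    ![1, (c - x) / (c - a₁), (x - a₁) / (c - a₁)]
    ((!![(0 : ℝ), C x a₂ - g₁ x a₂, C x b₂ - g₁ x b₂;
        C a₁ y - g₁ a₁ y, -(C a₁ a₂ - g₁ a₁ a₂), -(C a₁ b₂ - g₁ a₁ b₂);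
        α y - g₁ c y, -(C c a₂ - g₁ c a₂), -(C c b₂ - g₁ c b₂)]).mulVec
      ![1, (b₂ - y) / (b₂ - a₂), (y - a₂) / (b₂ - a₂)])

/-- The constrained form (45) for `u₂` on `Ω₂ = [c,b₁]×[a₂,b₂]`, with edge data `C`
on `x = b₁`, `y = a₂`, `y = b₂` and edge data `αm` (i.e. `α - κ`) on the interface `x = c`. -/
noncomputable def u2Form (c b₁ a₂ b₂ : ℝ) (C : ℝ → ℝ → ℝ) (αm : ℝ → ℝ)
    (g₂ : ℝ → ℝ → ℝ) (x y : ℝ) : ℝ :=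
  g₂ x y + dotProduct
    ![1, (b₁ - x) / (b₁ - c), (x - c) / (b₁ - c)]
    ((!![(0 : ℝ), C x a₂ - g₂ x a₂, C x b₂ - g₂ x b₂;
        αm y - g₂ c y, -(C c a₂ - g₂ c a₂), -(C c b₂ - g₂ c b₂);
        C b₁ y - g₂ b₁ y, -(C b₁ a₂ - g₂ b₁ a₂), -(C b₁ b₂ - g₂ b₁ b₂)]).mulVec
      ![1, (b₂ - y) / (b₂ - a₂), (y - a₂) / (b₂ - a₂)])

theorem stmt12 (a₁ c b₁ a₂ b₂ : ℝ) (h1 : a₁ < c) (h2 : c < b₁) (h3 : a₂ < b₂)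
    (C : ℝ → ℝ → ℝ) (κ : ℝ → ℝ) (hκa : κ a₂ = 0) (hκb : κ b₂ = 0)
    (αh : ℝ → ℝ) (g₁ g₂ : ℝ → ℝ → ℝ)
    (α : ℝ → ℝ) (hα : ∀ y, α y = alphaExt a₂ b₂ (C c a₂) (C c b₂) αh y)
    (u₁ u₂ : ℝ → ℝ → ℝ)
    (hu₁ : ∀ x y, u₁ x y = u1Form a₁ c a₂ b₂ C α g₁ x y)
    (hu₂ : ∀ x y, u₂ x y = u2Form c b₁ a₂ b₂ C (fun y => α y - κ y) g₂ x y) :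
    (∀ y ∈ Set.Icc a₂ b₂, u₁ a₁ y = C a₁ y) ∧
    (∀ x ∈ Set.Icc a₁ c, u₁ x a₂ = C x a₂ ∧ u₁ x b₂ = C x b₂) ∧
    (∀ y ∈ Set.Icc a₂ b₂, u₂ b₁ y = C b₁ y) ∧
    (∀ x ∈ Set.Icc c b₁, u₂ x a₂ = C x a₂ ∧ u₂ x b₂ = C x b₂) ∧
    (∀ y ∈ Set.Icc a₂ b₂, u₁ c y = u₂ c y + κ y) := by
  have hx1 : c - a₁ ≠ 0 := sub_ne_zero.2 h1.ne'
  have hx2 : b₁ - c ≠ 0 := sub_ne_zero.2 h2.ne'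
  have hy : b₂ - a₂ ≠ 0 := sub_ne_zero.2 h3.ne'
  have hαa : α a₂ = C c a₂ := by
    rw [hα, alphaExt, sub_self, zero_div, div_self hy]; ring
  have hαb : α b₂ = C c b₂ := by
    rw [hα, alphaExt, sub_self, zero_div, div_self hy]; ring
  refine ⟨?_, ?_, ?_, ?_, ?_⟩
  · intro y hy'
    rw [hu₁, u1Form]
    simp [dotProduct, Matrix.mulVec, Fin.sum_univ_three]
    field_simp
    ring
  · intro x hx
    constructor
    · rw [hu₁, u1Form]
      simp [dotProduct, Matrix.mulVec, Fin.sum_univ_three, hαa]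
      try field_simp
      try ring
    · rw [hu₁, u1Form]
      simp [dotProduct, Matrix.mulVec, Fin.sum_univ_three, hαb]
      try field_simp
      try ring
  · intro y hy'
    rw [hu₂, u2Form]
    simp [dotProduct, Matrix.mulVec, Fin.sum_univ_three]
    field_simp
    ring
  · intro x hx
    constructor
    · rw [hu₂, u2Form]
      simp [dotProduct, Matrix.mulVec, Fin.sum_univ_three, hαa, hκa]
      try field_simp
      try ring
    · rw [hu₂, u2Form]
      simp [dotProduct, Matrix.mulVec, Fin.sum_univ_three, hαb, hκb]
      try field_simp
      try ring
  · intro y hy'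
    rw [hu₁, hu₂, u1Form, u2Form]
    simp [dotProduct, Matrix.mulVec, Fin.sum_univ_three]
    field_simp
    ring
end

section
/- Under the setting of the two-subdomain C⁰ TFC construction (domains Ω₁ = [a₁,c]×[a₂,b₂], Ω₂ = [c,b₁]×[a₂,b₂], boundary data C, interface jump κ with κ(a₂) = κ(b₂) = 0), any pair of functions u₁ : Ω₁ → ℝ, u₂ : Ω₂ → ℝ satisfying the outer boundary conditions and u₁(c,y) = u₂(c,y) + κ(y) can be expressed in the constrained forms (44)–(45) for some choice of free functions g₁, g₂ and α̂ (namely g₁ = u₁, g₂ = u₂, α̂(y) = u₁(c,y)). -/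
theorem stmt13 (a₁ c b₁ a₂ b₂ : ℝ) (h1 : a₁ < c) (h2 : c < b₁) (h3 : a₂ < b₂)
    (C : ℝ → ℝ → ℝ) (κ : ℝ → ℝ) (hκa : κ a₂ = 0) (hκb : κ b₂ = 0)
    (u₁ u₂ : ℝ → ℝ → ℝ)
    (hb₁ : ∀ y ∈ Set.Icc a₂ b₂, u₁ a₁ y = C a₁ y)
    (hb₂ : ∀ x ∈ Set.Icc a₁ c, u₁ x a₂ = C x a₂ ∧ u₁ x b₂ = C x b₂)
    (hb₃ : ∀ y ∈ Set.Icc a₂ b₂, u₂ b₁ y = C b₁ y)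
    (hb₄ : ∀ x ∈ Set.Icc c b₁, u₂ x a₂ = C x a₂ ∧ u₂ x b₂ = C x b₂)
    (hjump : ∀ y ∈ Set.Icc a₂ b₂, u₁ c y = u₂ c y + κ y) :
    ∃ (g₁ g₂ : ℝ → ℝ → ℝ) (αh : ℝ → ℝ),
      (∀ x ∈ Set.Icc a₁ c, ∀ y ∈ Set.Icc a₂ b₂,
        u₁ x y = u1Form a₁ c a₂ b₂ C
          (alphaExt a₂ b₂ (C c a₂) (C c b₂) αh) g₁ x y) ∧
      (∀ x ∈ Set.Icc c b₁, ∀ y ∈ Set.Icc a₂ b₂,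
        u₂ x y = u2Form c b₁ a₂ b₂ C
          (fun y => alphaExt a₂ b₂ (C c a₂) (C c b₂) αh y - κ y) g₂ x y) := by
  refine ⟨u₁, u₂, fun y => u₁ c y, ?_, ?_⟩
  · intro x hx y hy
    have hca := hb₂ c ⟨le_of_lt h1, le_refl c⟩
    have hx2 := hb₂ x hx
    have hy1 := hb₁ y hy
    have hc1 := hb₂ a₁ ⟨le_refl a₁, le_of_lt h1⟩
    simp only [u1Form, alphaExt, hca.1, hca.2, hx2.1, hx2.2, hy1, hc1.1, hc1.2,
      Matrix.vecHead, Matrix.mulVec,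
      dotProduct, Fin.sum_univ_three, Matrix.cons_val_zero, Matrix.cons_val_one,
      Matrix.head_cons, Matrix.cons_val_two, Matrix.tail_cons, Matrix.of_apply,
      Matrix.cons_val', Matrix.empty_val', Matrix.cons_val_fin_one]
    ring
  · intro x hx y hy
    have hca := hb₂ c ⟨le_of_lt h1, le_refl c⟩
    have hx2 := hb₄ x hx
    have hy1 := hb₃ y hy
    have hj := hjump y hy
    have hc1 := hb₄ c ⟨le_refl c, le_of_lt h2⟩
    have hc2 := hb₄ b₁ ⟨le_of_lt h2, le_refl b₁⟩
    simp only [u2Form, alphaExt, hca.1, hca.2, hx2.1, hx2.2, hy1, hj, hc1.1, hc1.2,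
      hc2.1, hc2.2, Matrix.vecHead, Matrix.mulVec,
      dotProduct, Fin.sum_univ_three, Matrix.cons_val_zero, Matrix.cons_val_one,
      Matrix.head_cons, Matrix.cons_val_two, Matrix.tail_cons, Matrix.of_apply,
      Matrix.cons_val', Matrix.empty_val', Matrix.cons_val_fin_one]
    ring
end

section
/- Let the rectangle Ω = [a₁,b₁]×[a₂,b₂] be partitioned into N_x × N_y subrectangles Ω_{ij} = [X_i,X_{i+1}]×[Y_j,Y_{j+1}]. Suppose nodal parameters α̂_{ij} for 0 ≤ i ≤ N_x, 0 ≤ j ≤ N_y, edge functions G_{ij}(y) on vertical edges with G_{ij}(Y_j) = α̂_{ij}, G_{ij}(Y_{j+1}) = α̂_{i,j+1}, and H_{ij}(x) on horizontal edges with H_{ij}(X_i) = α̂_{ij}, H_{ij}(X_{i+1}) = α̂_{i+1,j}, are given. Define on each Ω_{ij} the 2D C⁰ FCE form u_{e_{ij}}(x,y) = g_{e_{ij}}(x,y) - v₁ᵀ M_g v₂ + v₁ᵀ M_b v₂ (equation (79) of the paper, with M_g built from g_{e_{ij}} and M_b built from G, H, and α̂). Then each u_{e_{ij}} has boundary traces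 u_{e_{ij}}(X_i,·) = G_{ij}, u_{e_{ij}}(X_{i+1},·) = G_{i+1,j}, u_{e_{ij}}(·,Y_j) = H_{ij}, u_{e_{ij}}(·,Y_{j+1}) = H_{i,j+1}; in particular, adjacent elements agree on their shared edges, i.e. the 2D piecewise function is C⁰ across all interior element boundaries, for arbitrary free functions g_{e_{ij}}. -/
/-- The 2D C⁰ FCE form (equation (79) of the paper) on the element
`[Xi,Xi1] × [Yj,Yj1]`, with free function `g`, edge functions
`Gij, Gi1j` (vertical edges), `Hij, Hij1` (horizontal edges), and corner
parameters `aij, aij1, ai1j, ai1j1`. -/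
noncomputable def fce2D (Xi Xi1 Yj Yj1 : ℝ) (g : ℝ → ℝ → ℝ)
    (Gij Gi1j Hij Hij1 : ℝ → ℝ)
    (aij aij1 ai1j ai1j1 : ℝ) (x y : ℝ) : ℝ :=
  let v1 : Fin 3 → ℝ := ![1, (Xi1 - x) / (Xi1 - Xi), (x - Xi) / (Xi1 - Xi)]
  let v2 : Fin 3 → ℝ := ![1, (Yj1 - y) / (Yj1 - Yj), (y - Yj) / (Yj1 - Yj)]
  let Mg : Matrix (Fin 3) (Fin 3) ℝ :=
    !![0, g x Yj, g x Yj1;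
       g Xi y, -g Xi Yj, -g Xi Yj1;
       g Xi1 y, -g Xi1 Yj, -g Xi1 Yj1]
  let Mb : Matrix (Fin 3) (Fin 3) ℝ :=
    !![0, Hij x, Hij1 x;
       Gij y, -aij, -aij1;
       Gi1j y, -ai1j, -ai1j1]
  g x y - dotProduct v1 (Mg.mulVec v2) + dotProduct v1 (Mb.mulVec v2)

lemma fce2D_left (Xi Xi1 Yj Yj1 : ℝ) (hx : Xi1 - Xi ≠ 0) (g : ℝ → ℝ → ℝ)
    (Gij Gi1j Hij Hij1 : ℝ → ℝ) (aij aij1 ai1j ai1j1 : ℝ) (y : ℝ)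
    (h1 : Hij Xi = aij) (h2 : Hij1 Xi = aij1) :
    fce2D Xi Xi1 Yj Yj1 g Gij Gi1j Hij Hij1 aij aij1 ai1j ai1j1 Xi y = Gij y := by
  simp only [fce2D, dotProduct, Matrix.mulVec, Fin.sum_univ_three,
    Matrix.cons_val_zero, Matrix.cons_val_one, Matrix.head_cons, Matrix.cons_val_two,
    Matrix.tail_cons, Matrix.of_apply, Matrix.cons_val', Matrix.empty_val',
    Matrix.cons_val_fin_one, h1, h2]
  field_simp
  ring

lemma fce2D_right (Xi Xi1 Yj Yj1 : ℝ) (hx : Xi1 - Xi ≠ 0) (g : ℝ → ℝ → ℝ)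
    (Gij Gi1j Hij Hij1 : ℝ → ℝ) (aij aij1 ai1j ai1j1 : ℝ) (y : ℝ)
    (h1 : Hij Xi1 = ai1j) (h2 : Hij1 Xi1 = ai1j1) :
    fce2D Xi Xi1 Yj Yj1 g Gij Gi1j Hij Hij1 aij aij1 ai1j ai1j1 Xi1 y = Gi1j y := by
  simp only [fce2D, dotProduct, Matrix.mulVec, Fin.sum_univ_three,
    Matrix.cons_val_zero, Matrix.cons_val_one, Matrix.head_cons, Matrix.cons_val_two,
    Matrix.tail_cons, Matrix.of_apply, Matrix.cons_val', Matrix.empty_val',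
    Matrix.cons_val_fin_one, Matrix.vecHead, h1, h2]
  field_simp
  ring

lemma fce2D_bot (Xi Xi1 Yj Yj1 : ℝ) (hy : Yj1 - Yj ≠ 0) (g : ℝ → ℝ → ℝ)
    (Gij Gi1j Hij Hij1 : ℝ → ℝ) (aij aij1 ai1j ai1j1 : ℝ) (x : ℝ)
    (h1 : Gij Yj = aij) (h2 : Gi1j Yj = ai1j) :
    fce2D Xi Xi1 Yj Yj1 g Gij Gi1j Hij Hij1 aij aij1 ai1j ai1j1 x Yj = Hij x := by
  simp only [fce2D, dotProduct, Matrix.mulVec, Fin.sum_univ_three,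
    Matrix.cons_val_zero, Matrix.cons_val_one, Matrix.head_cons, Matrix.cons_val_two,
    Matrix.tail_cons, Matrix.of_apply, Matrix.cons_val', Matrix.empty_val',
    Matrix.cons_val_fin_one, Matrix.vecHead, h1, h2]
  field_simp
  ring

lemma fce2D_top (Xi Xi1 Yj Yj1 : ℝ) (hy : Yj1 - Yj ≠ 0) (g : ℝ → ℝ → ℝ)
    (Gij Gi1j Hij Hij1 : ℝ → ℝ) (aij aij1 ai1j ai1j1 : ℝ) (x : ℝ)
    (h1 : Gij Yj1 = aij1) (h2 : Gi1j Yj1 = ai1j1) :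
    fce2D Xi Xi1 Yj Yj1 g Gij Gi1j Hij Hij1 aij aij1 ai1j ai1j1 x Yj1 = Hij1 x := by
  simp only [fce2D, dotProduct, Matrix.mulVec, Fin.sum_univ_three,
    Matrix.cons_val_zero, Matrix.cons_val_one, Matrix.head_cons, Matrix.cons_val_two,
    Matrix.tail_cons, Matrix.of_apply, Matrix.cons_val', Matrix.empty_val',
    Matrix.cons_val_fin_one, Matrix.vecHead, h1, h2]
  field_simp
  ring

theorem stmt18 (Nx Ny : ℕ) (X Y : ℕ → ℝ)
    (hX : ∀ i < Nx, X i < X (i + 1)) (hY : ∀ j < Ny, Y j < Y (j + 1))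
    (αh : ℕ → ℕ → ℝ) (G H : ℕ → ℕ → ℝ → ℝ)
    (hG : ∀ i ≤ Nx, ∀ j < Ny, G i j (Y j) = αh i j ∧ G i j (Y (j + 1)) = αh i (j + 1))
    (hH : ∀ i < Nx, ∀ j ≤ Ny, H i j (X i) = αh i j ∧ H i j (X (i + 1)) = αh (i + 1) j)
    (g : ℕ → ℕ → ℝ → ℝ → ℝ) (u : ℕ → ℕ → ℝ → ℝ → ℝ)
    (hu : ∀ i < Nx, ∀ j < Ny, ∀ x y, u i j x y =
      fce2D (X i) (X (i + 1)) (Y j) (Y (j + 1)) (g i j)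
        (G i j) (G (i + 1) j) (H i j) (H i (j + 1))
        (αh i j) (αh i (j + 1)) (αh (i + 1) j) (αh (i + 1) (j + 1)) x y) :
    (∀ i < Nx, ∀ j < Ny,
      (∀ y ∈ Set.Icc (Y j) (Y (j + 1)),
        u i j (X i) y = G i j y ∧ u i j (X (i + 1)) y = G (i + 1) j y) ∧
      (∀ x ∈ Set.Icc (X i) (X (i + 1)),
        u i j x (Y j) = H i j x ∧ u i j x (Y (j + 1)) = H i (j + 1) x)) ∧
    (∀ i, i + 1 < Nx → ∀ j < Ny, ∀ y ∈ Set.Icc (Y j) (Y (j + 1)),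
      u i j (X (i + 1)) y = u (i + 1) j (X (i + 1)) y) ∧
    (∀ i < Nx, ∀ j, j + 1 < Ny → ∀ x ∈ Set.Icc (X i) (X (i + 1)),
      u i j x (Y (j + 1)) = u i (j + 1) x (Y (j + 1))) := by
  have key : ∀ i < Nx, ∀ j < Ny,
      (∀ y, u i j (X i) y = G i j y ∧ u i j (X (i + 1)) y = G (i + 1) j y) ∧
      (∀ x, u i j x (Y j) = H i j x ∧ u i j x (Y (j + 1)) = H i (j + 1) x) := by
    intro i hi j hj
    have hx : X (i + 1) - X i ≠ 0 := sub_ne_zero.mpr (hX i hi).ne'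
    have hy : Y (j + 1) - Y j ≠ 0 := sub_ne_zero.mpr (hY j hj).ne'
    obtain ⟨hH1, hH2⟩ := hH i hi j (le_of_lt hj)
    obtain ⟨hH3, hH4⟩ := hH i hi (j + 1) hj
    obtain ⟨hG1, hG2⟩ := hG i (le_of_lt hi) j hj
    obtain ⟨hG3, hG4⟩ := hG (i + 1) hi j hj
    refine ⟨fun y => ?_, fun x => ?_⟩
    · rw [hu i hi j hj, hu i hi j hj]
      exact ⟨fce2D_left _ _ _ _ hx _ _ _ _ _ _ _ _ _ _ hH1 hH3,
        fce2D_right _ _ _ _ hx _ _ _ _ _ _ _ _ _ _ hH2 hH4⟩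
    · rw [hu i hi j hj, hu i hi j hj]
      exact ⟨fce2D_bot _ _ _ _ hy _ _ _ _ _ _ _ _ _ _ hG1 hG3,
        fce2D_top _ _ _ _ hy _ _ _ _ _ _ _ _ _ _ hG2 hG4⟩
  refine ⟨fun i hi j hj => ⟨fun y _ => (key i hi j hj).1 y, fun x _ => (key i hi j hj).2 x⟩,
    fun i hi1 j hj y _ => ?_, fun i hi j hj1 x _ => ?_⟩
  · rw [((key i (Nat.lt_of_succ_lt hi1) j hj).1 y).2,
      ((key (i + 1) hi1 j hj).1 y).1]
  · rw [((key i hi j (Nat.lt_of_succ_lt hj1)).2 x).2,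
      ((key i hi (j + 1) hj1).2 x).1]
end
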